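/- The multiplier M_{m,Φ,Φ} is unconditionally convergent on H if and only if (√mₙ φₙ) is a Bessel sequence for H, where √mₙ denotes any choice of complex square root of mₙ. -/

import Mathlib

open scoped BigOperators ComplexConjugate
open Filter Finset

variable {H : Type*} [NormedAddCommGroup H] [InnerProductSpace ℂ H] [CompleteSpace H]

local notation "⟪" x ", " y "⟫" => @inner ℂ _ _ x y

/-- A series `∑ φ n` converges unconditionally if every rearrangement converges. -/
def UncondConv {H : Type*} [NormedAddCommGroup H] (φ : ℕ → H) : Prop :=
  ∀ σ : Equiv.Perm ℕ, ∃ L : H,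
    Tendsto (fun N => ∑ n ∈ Finset.range N, φ (σ n)) atTop (nhds L)

/-- `ξ` is a Bessel sequence: `∑ n, |⟪h, ξ n⟫|² ≤ B ‖h‖²` for all `h`. -/
def Bessel {H : Type*} [NormedAddCommGroup H] [InnerProductSpace ℂ H] (ξ : ℕ → H) : Prop :=
  ∃ B : ℝ, ∀ h : H, ∀ F : Finset ℕ, ∑ n ∈ F, ‖(inner ℂ h (ξ n) : ℂ)‖ ^ 2 ≤ B * ‖h‖ ^ 2

/-- `φ` is a Riesz basis: complete, and `A ∑|cₙ|² ≤ ‖∑ cₙ φₙ‖² ≤ B ∑|cₙ|²` for `(cₙ) ∈ ℓ²`. -/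
def RieszBasis {H : Type*} [NormedAddCommGroup H] [InnerProductSpace ℂ H] (φ : ℕ → H) : Prop :=
  (Submodule.span ℂ (Set.range φ)).topologicalClosure = ⊤ ∧
  ∃ A B : ℝ, 0 < A ∧ ∀ c : ℕ → ℂ, Summable (fun n => ‖c n‖ ^ 2) →
    ∃ s : H, HasSum (fun n => c n • φ n) s ∧
      A * ∑' n, ‖c n‖ ^ 2 ≤ ‖s‖ ^ 2 ∧ ‖s‖ ^ 2 ≤ B * ∑' n, ‖c n‖ ^ 2

private lemma exists_perm (C : ℕ → Finset ℕ) (hmono : Monotone C)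
    (hcov : ∀ n : ℕ, ∃ k, n ∈ C k) :
    ∃ σ : Equiv.Perm ℕ, ∀ k, (Finset.range (C k).card).image σ = C k := by
  classical
  let L : ℕ → List ℕ := fun k => Nat.rec ((C 0).sort (· ≤ ·))
    (fun k l => l ++ ((C (k+1)) \ (C k)).sort (· ≤ ·)) k
  have hLs : ∀ k, L (k+1) = L k ++ ((C (k+1)) \ (C k)).sort (· ≤ ·) := fun k => rfl
  have hmem : ∀ k a, a ∈ L k ↔ a ∈ C k := by
    intro k
    induction k with
    | zero => intro a; simp [L, Finset.mem_sort]
    | succ k ih =>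
      intro a
      rw [hLs, List.mem_append, ih, Finset.mem_sort, Finset.mem_sdiff]
      constructor
      · rintro (h | ⟨h, -⟩)
        · exact hmono (Nat.le_succ k) h
        · exact h
      · intro h
        by_cases h' : a ∈ C k
        · exact Or.inl h'
        · exact Or.inr ⟨h, h'⟩
  have hnd : ∀ k, (L k).Nodup := by
    intro k
    induction k with
    | zero => exact Finset.sort_nodup _ _
    | succ k ih =>
      rw [hLs]
      refine List.Nodup.append ih (Finset.sort_nodup _ _) ?_
      intro a ha hb
      rw [hmem] at ha
      rw [Finset.mem_sort, Finset.mem_sdiff] at hb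
      exact hb.2 ha
  have htf : ∀ k, (L k).toFinset = C k := by
    intro k; ext a; rw [List.mem_toFinset, hmem]
  have hlen : ∀ k, (L k).length = (C k).card := by
    intro k
    rw [← htf k, List.toFinset_card_of_nodup (hnd k)]
  have hpre : ∀ {k l}, k ≤ l → L k <+: L l := by
    intro k l hkl
    induction l, hkl using Nat.le_induction with
    | base => exact List.prefix_rfl
    | succ l _ ih => exact ih.trans (by rw [hLs]; exact List.prefix_append _ _)
  have hex : ∀ i : ℕ, ∃ k, i < (L k).length := by
    intro i
    have : ∃ k, ∀ j ≤ i, j ∈ C k := by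
      induction i with
      | zero =>
        obtain ⟨k, hk⟩ := hcov 0
        exact ⟨k, fun j hj => by simpa [Nat.le_zero.mp hj] using hk⟩
      | succ i ih =>
        obtain ⟨k₁, hk₁⟩ := ih
        obtain ⟨k₂, hk₂⟩ := hcov (i+1)
        refine ⟨max k₁ k₂, fun j hj => ?_⟩
        rcases Nat.lt_or_ge j (i+1) with h | h
        · exact hmono (le_max_left _ _) (hk₁ j (Nat.lt_succ_iff.mp h))
        · have : j = i + 1 := le_antisymm hj h
          exact hmono (le_max_right _ _) (this ▸ hk₂)
    obtain ⟨k, hk⟩ := this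
    refine ⟨k, ?_⟩
    rw [hlen]
    have : Finset.range (i+1) ⊆ C k := fun j hj => hk j (Nat.lt_succ_iff.mp (Finset.mem_range.mp hj))
    calc i < i + 1 := Nat.lt_succ_self i
    _ = (Finset.range (i+1)).card := (Finset.card_range _).symm
    _ ≤ (C k).card := Finset.card_le_card this
  let K : ℕ → ℕ := fun i => Nat.find (hex i)
  have hK : ∀ i, i < (L (K i)).length := fun i => Nat.find_spec (hex i)
  let g : ℕ → ℕ := fun i => (L (K i))[i]'(hK i)
  have hg : ∀ i k (hk : i < (L k).length), g i = (L k)[i] := by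
    intro i k hk
    rcases le_total (K i) k with h | h
    · exact (hpre h).getElem (hK i)
    · exact ((hpre h).getElem hk).symm
  have ginj : Function.Injective g := by
    intro i j hij
    have hi : i < (L (max (K i) (K j))).length :=
      lt_of_lt_of_le (hK i) (hpre (le_max_left _ _)).length_le
    have hj : j < (L (max (K i) (K j))).length :=
      lt_of_lt_of_le (hK j) (hpre (le_max_right _ _)).length_le
    rw [hg i _ hi, hg j _ hj] at hij
    exact ((hnd _).getElem_inj_iff).mp hij
  have gsurj : Function.Surjective g := by
    intro n
    obtain ⟨k, hk⟩ := hcov n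
    have : n ∈ L k := (hmem k n).mpr hk
    obtain ⟨i, hi, hin⟩ := List.mem_iff_getElem.mp this
    exact ⟨i, (hg i k hi).trans hin⟩
  refine ⟨Equiv.ofBijective g ⟨ginj, gsurj⟩, ?_⟩
  intro k
  ext a
  simp only [Finset.mem_image, Finset.mem_range, Equiv.ofBijective_apply]
  constructor
  · rintro ⟨i, hi, rfl⟩
    rw [← hlen] at hi
    show g i ∈ C k
    rw [hg i k hi]
    exact (hmem k _).mp (List.getElem_mem _)
  · intro ha
    obtain ⟨i, hi, hin⟩ := List.mem_iff_getElem.mp ((hmem k a).mpr ha)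
    exact ⟨i, by rw [← hlen]; exact hi, (hg i k hi).trans hin⟩

private lemma uncond_vanishing {x : ℕ → H} (h : UncondConv x) {ε : ℝ} (hε : 0 < ε) :
    ∃ N : ℕ, ∀ F : Finset ℕ, (∀ n ∈ F, N ≤ n) → ‖∑ n ∈ F, x n‖ < ε := by
  classical
  by_contra hc
  push_neg at hc
  choose Fb h1 h2 using hc
  let N : ℕ → ℕ := fun k => Nat.rec 0 (fun _ n => max n ((Fb n).sup id) + 1) k
  have hNs : ∀ k, N (k+1) = max (N k) ((Fb (N k)).sup id) + 1 := fun k => rfl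
  have hNmono : ∀ k, N k < N (k+1) := fun k => by
    rw [hNs]; exact Nat.lt_succ_of_le (le_max_left _ _)
  have hNge : ∀ k, k ≤ N k := by
    intro k
    induction k with
    | zero => exact Nat.zero_le _
    | succ k ih => exact Nat.lt_of_le_of_lt ih (hNmono k)
  have hFlt : ∀ k n, n ∈ Fb (N k) → n < N (k+1) := by
    intro k n hn
    rw [hNs]
    exact Nat.lt_succ_of_le (le_max_of_le_right (Finset.le_sup (f := id) hn))
  have hFge : ∀ k n, n ∈ Fb (N k) → N k ≤ n := fun k n hn => h1 (N k) n hn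
  -- the chain of finsets
  let Cs : ℕ → Finset ℕ := fun j =>
    Finset.range (N (j / 2)) ∪ (if j % 2 = 0 then ∅ else Fb (N (j / 2)))
  have hCe : ∀ k, Cs (2*k) = Finset.range (N k) := by
    intro k
    simp only [Cs, Nat.mul_mod_right, Nat.mul_div_cancel_left _ (by norm_num : 0 < 2)]
    simp
  have hCo : ∀ k, Cs (2*k+1) = Finset.range (N k) ∪ Fb (N k) := by
    intro k
    have h1' : (2*k+1) % 2 = 1 := by omega
    have h2' : (2*k+1) / 2 = k := by omega
    simp [Cs, h1', h2']
  have hmono : Monotone Cs := by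
    apply monotone_nat_of_le_succ
    intro j
    rcases Nat.even_or_odd j with ⟨k, hk⟩ | ⟨k, hk⟩
    · subst hk
      rw [show k + k = 2*k by ring, hCe, show 2*k+1 = 2*k+1 from rfl, hCo]
      exact Finset.subset_union_left
    · subst hk
      rw [hCo, show 2*k+1+1 = 2*(k+1) by ring, hCe]
      intro a ha
      rw [Finset.mem_union, Finset.mem_range] at ha
      rw [Finset.mem_range]
      rcases ha with ha | ha
      · exact lt_of_lt_of_le ha (hNmono k).le
      · exact hFlt k a ha
  have hcov : ∀ n : ℕ, ∃ k, n ∈ Cs k := by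
    intro n
    refine ⟨2*(n+1), ?_⟩
    rw [hCe, Finset.mem_range]
    exact lt_of_lt_of_le (Nat.lt_succ_self n) (hNge (n+1))
  obtain ⟨σ, hσ⟩ := exists_perm Cs hmono hcov
  obtain ⟨Lim, hT⟩ := h σ
  set P : ℕ → H := fun j => ∑ n ∈ Finset.range j, x (σ n) with hP
  have hsum : ∀ j, P ((Cs j).card) = ∑ n ∈ Cs j, x n := by
    intro j
    have h' : ∑ n ∈ Cs j, x n = ∑ n ∈ (Finset.range (Cs j).card).image σ, x n := by
      rw [hσ j]
    rw [h', Finset.sum_image (fun a _ b _ hab => σ.injective hab)]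
  have hdiff : ∀ k, P ((Cs (2*k+1)).card) - P ((Cs (2*k)).card) = ∑ n ∈ Fb (N k), x n := by
    intro k
    rw [hsum, hsum, hCe, hCo]
    have hdisj : Disjoint (Finset.range (N k)) (Fb (N k)) := by
      rw [Finset.disjoint_right]
      intro a ha
      rw [Finset.mem_range]
      exact not_lt.mpr (hFge k a ha)
    rw [Finset.sum_union hdisj]
    abel
  have hcard : ∀ j, j / 2 ≤ (Cs j).card := by
    intro j
    calc j / 2 ≤ N (j / 2) := hNge _
    _ = (Finset.range (N (j/2))).card := (Finset.card_range _).symm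
    _ ≤ (Cs j).card := Finset.card_le_card Finset.subset_union_left
  have ht1 : Tendsto (fun k => (Cs (2*k)).card) atTop atTop :=
    tendsto_atTop_mono (fun k => by simpa using hcard (2*k)) tendsto_id
  have ht2 : Tendsto (fun k => (Cs (2*k+1)).card) atTop atTop :=
    tendsto_atTop_mono (fun k => le_trans (by omega : k ≤ (2*k+1)/2) (hcard (2*k+1))) tendsto_id
  have hc1 : Tendsto (fun k => P ((Cs (2*k)).card)) atTop (nhds Lim) := hT.comp ht1
  have hc2 : Tendsto (fun k => P ((Cs (2*k+1)).card)) atTop (nhds Lim) := hT.comp ht2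
  have hzero : Tendsto (fun k => P ((Cs (2*k+1)).card) - P ((Cs (2*k)).card)) atTop (nhds 0) := by
    simpa using hc2.sub hc1
  have : Tendsto (fun k => ‖∑ n ∈ Fb (N k), x n‖) atTop (nhds 0) := by
    simpa [hdiff] using hzero.norm
  have := (this.eventually (eventually_lt_nhds hε)).exists
  obtain ⟨k, hk⟩ := this
  exact absurd hk (not_lt.mpr (h2 (N k)))

private lemma sum_abs_le_of_subsets {F : Finset ℕ} {z : ℕ → ℂ} {c : ℝ}
    (h : ∀ G ⊆ F, ‖∑ n ∈ G, z n‖ ≤ c) : ∑ n ∈ F, ‖z n‖ ≤ 4 * c := by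
  classical
  have key : ∀ w : ℕ → ℝ, (∀ n, |w n| ≤ ‖z n‖) →
      (∀ G : Finset ℕ, G ⊆ F → |∑ n ∈ G, w n| ≤ c) → ∑ n ∈ F, |w n| ≤ 2 * c := by
    intro w hw hG
    have hsplit := Finset.sum_filter_add_sum_filter_not F (fun n => 0 ≤ w n) (fun n => |w n|)
    rw [← hsplit]
    have e1 : ∑ n ∈ F.filter (fun n => 0 ≤ w n), |w n|
        = ∑ n ∈ F.filter (fun n => 0 ≤ w n), w n :=
      Finset.sum_congr rfl (fun n hn => abs_of_nonneg (Finset.mem_filter.mp hn).2)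
    have e2 : ∑ n ∈ F.filter (fun n => ¬ 0 ≤ w n), |w n|
        = -∑ n ∈ F.filter (fun n => ¬ 0 ≤ w n), w n := by
      rw [← Finset.sum_neg_distrib]
      exact Finset.sum_congr rfl (fun n hn =>
        abs_of_neg (not_le.mp (Finset.mem_filter.mp hn).2))
    rw [e1, e2]
    have b1 : ∑ n ∈ F.filter (fun n => 0 ≤ w n), w n ≤ c :=
      le_trans (le_abs_self _) (hG _ (Finset.filter_subset _ _))
    have b2 : -∑ n ∈ F.filter (fun n => ¬ 0 ≤ w n), w n ≤ c :=
      le_trans (neg_le_abs _) (hG _ (Finset.filter_subset _ _))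
    linarith
  have hre := key (fun n => (z n).re) (fun n => Complex.abs_re_le_norm (z n))
    (fun G hG => by
      rw [← Complex.re_sum]
      exact le_trans (Complex.abs_re_le_norm _) (h G hG))
  have him := key (fun n => (z n).im) (fun n => Complex.abs_im_le_norm (z n))
    (fun G hG => by
      rw [← Complex.im_sum]
      exact le_trans (Complex.abs_im_le_norm _) (h G hG))
  have hb : ∀ n, ‖z n‖ ≤ |(z n).re| + |(z n).im| := fun n => Complex.norm_le_abs_re_add_abs_im _
  calc ∑ n ∈ F, ‖z n‖ ≤ ∑ n ∈ F, (|(z n).re| + |(z n).im|) := Finset.sum_le_sum (fun n _ => hb n)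
  _ = (∑ n ∈ F, |(z n).re|) + ∑ n ∈ F, |(z n).im| := Finset.sum_add_distrib
  _ ≤ 2 * c + 2 * c := add_le_add hre him
  _ = 4 * c := by ring

private lemma bessel_synth {ψ : ℕ → H} {B : ℝ} (hB : 0 ≤ B)
    (h : ∀ h : H, ∀ F : Finset ℕ, ∑ n ∈ F, ‖(inner ℂ h (ψ n) : ℂ)‖ ^ 2 ≤ B * ‖h‖ ^ 2)
    (c : ℕ → ℂ) (F : Finset ℕ) :
    ‖∑ n ∈ F, c n • ψ n‖ ^ 2 ≤ B * ∑ n ∈ F, ‖c n‖ ^ 2 := by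
  classical
  set u := ∑ n ∈ F, c n • ψ n with hu
  have h0 : ((‖u‖:ℂ) ^ 2) = inner ℂ u u := (inner_self_eq_norm_sq_to_K u).symm
  have h1 : ‖u‖ ^ 2 = ‖(inner ℂ u u : ℂ)‖ := by
    rw [← h0]
    simp [norm_pow]
  have h2 : (inner ℂ u u : ℂ) = ∑ n ∈ F, c n * inner ℂ u (ψ n) := by
    rw [hu, inner_sum]
    exact Finset.sum_congr rfl (fun n _ => inner_smul_right _ _ _)
  have h3 : ‖u‖ ^ 2 ≤ ∑ n ∈ F, ‖c n‖ * ‖(inner ℂ u (ψ n) : ℂ)‖ := by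
    rw [h1, h2]
    refine le_trans (norm_sum_le _ _) (le_of_eq ?_)
    exact Finset.sum_congr rfl (fun n _ => norm_mul _ _)
  have hcs : (∑ n ∈ F, ‖c n‖ * ‖(inner ℂ u (ψ n) : ℂ)‖) ^ 2
      ≤ (∑ n ∈ F, ‖c n‖ ^ 2) * ∑ n ∈ F, ‖(inner ℂ u (ψ n) : ℂ)‖ ^ 2 :=
    Finset.sum_mul_sq_le_sq_mul_sq F _ _
  have hBnn : (0:ℝ) ≤ B * ‖u‖ ^ 2 := le_trans (Finset.sum_nonneg (fun n _ => sq_nonneg _)) (h u F)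
  have h4 : (‖u‖ ^ 2) ^ 2 ≤ (∑ n ∈ F, ‖c n‖ ^ 2) * (B * ‖u‖ ^ 2) := by
    calc (‖u‖ ^ 2) ^ 2 ≤ (∑ n ∈ F, ‖c n‖ * ‖(inner ℂ u (ψ n) : ℂ)‖) ^ 2 := by
          apply pow_le_pow_left₀ (by positivity) h3
    _ ≤ (∑ n ∈ F, ‖c n‖ ^ 2) * ∑ n ∈ F, ‖(inner ℂ u (ψ n) : ℂ)‖ ^ 2 := hcs
    _ ≤ (∑ n ∈ F, ‖c n‖ ^ 2) * (B * ‖u‖ ^ 2) := by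
          apply mul_le_mul_of_nonneg_left (h u F)
          exact Finset.sum_nonneg (fun n _ => sq_nonneg _)
  rcases eq_or_lt_of_le (sq_nonneg ‖u‖) with h5 | h5
  · rw [← h5]
    exact mul_nonneg hB (Finset.sum_nonneg (fun n _ => sq_nonneg _))
  · nlinarith [h4, h5, Finset.sum_nonneg (fun n (_ : n ∈ F) => sq_nonneg ‖c n‖)]

private lemma tau_cont (φn : H) (mn : ℂ) :
    Continuous (fun f : H => (mn * (inner ℂ f φn : ℂ)) • φn) :=
  (continuous_const.mul (Continuous.inner continuous_id continuous_const)).smul continuous_const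

private noncomputable def tauR (φn : H) (mn : ℂ) : H →L[ℝ] H where
  toFun := fun f => (mn * (inner ℂ f φn : ℂ)) • φn
  map_add' := fun f g => by
    show (mn * (inner ℂ (f + g) φn : ℂ)) • φn = (mn * (inner ℂ f φn : ℂ)) • φn + (mn * (inner ℂ g φn : ℂ)) • φn
    rw [inner_add_left, mul_add, add_smul]
  map_smul' := fun r f => by
    show (mn * (inner ℂ (r • f) φn : ℂ)) • φn = r • ((mn * (inner ℂ f φn : ℂ)) • φn)
    rw [← algebraMap_smul ℂ r f, ← algebraMap_smul ℂ r ((mn * (inner ℂ f φn : ℂ)) • φn),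
      inner_smul_left, smul_smul]
    simp only [Complex.coe_algebraMap, Complex.conj_ofReal]
    congr 1
    ring
  cont := tau_cont φn mn

theorem stmt19 (φ : ℕ → H) (m : ℕ → ℂ) (s : ℕ → ℂ) (hs : ∀ n, s n ^ 2 = m n) :
    (∀ f : H, UncondConv (fun n => (m n * ⟪f, φ n⟫) • φ n)) ↔
    Bessel (fun n => s n • φ n) := by
  classical
  constructor
  · -- unconditional convergence implies Bessel
    intro hU
    set τ : ℕ → (H →L[ℝ] H) := fun n => tauR (φ n) (m n) with hτ
    set T : Finset ℕ → (H →L[ℝ] H) := fun F => ∑ n ∈ F, τ n with hT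
    have hTapp : ∀ (F : Finset ℕ) (f : H), T F f = ∑ n ∈ F, (m n * ⟪f, φ n⟫) • φ n := by
      intro F f
      rw [hT]
      rw [ContinuousLinearMap.sum_apply]
      rfl
    have hpt : ∀ f : H, ∃ C, ∀ F : Finset ℕ, ‖T F f‖ ≤ C := by
      intro f
      obtain ⟨N, hN⟩ := uncond_vanishing (hU f) one_pos
      refine ⟨(∑ n ∈ Finset.range N, ‖(m n * ⟪f, φ n⟫) • φ n‖) + 1, fun F => ?_⟩
      rw [hTapp]
      rw [← Finset.sum_filter_add_sum_filter_not F (fun n => n < N)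
        (fun n => (m n * ⟪f, φ n⟫) • φ n)]
      refine le_trans (norm_add_le _ _) (add_le_add ?_ ?_)
      · refine le_trans (norm_sum_le _ _)
          (Finset.sum_le_sum_of_subset_of_nonneg ?_ (fun _ _ _ => norm_nonneg _))
        intro a ha
        exact Finset.mem_range.mpr (Finset.mem_filter.mp ha).2
      · exact (hN _ (fun n hn => not_lt.mp (of_eq_true (eq_true (Finset.mem_filter.mp hn).2) ))).le
    obtain ⟨C', hC'⟩ := banach_steinhaus hpt
    have hC'0 : 0 ≤ C' := le_trans (norm_nonneg (T ∅)) (hC' ∅)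
    refine ⟨4 * C', fun f F => ?_⟩
    set z : ℕ → ℂ := fun n => m n * ⟪f, φ n⟫ * ⟪f, φ n⟫ with hzdef
    have hz : ∀ G ⊆ F, ‖∑ n ∈ G, z n‖ ≤ C' * ‖f‖ * ‖f‖ := by
      intro G hG
      have he : ∑ n ∈ G, z n = ⟪f, T G f⟫ := by
        rw [hTapp, inner_sum]
        refine Finset.sum_congr rfl (fun n _ => ?_)
        rw [inner_smul_right]
      rw [he]
      calc ‖(⟪f, T G f⟫ : ℂ)‖ ≤ ‖f‖ * ‖T G f‖ := norm_inner_le_norm _ _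
      _ ≤ ‖f‖ * (C' * ‖f‖) := by
          refine mul_le_mul_of_nonneg_left ?_ (norm_nonneg f)
          exact le_trans ((T G).le_opNorm f)
            (mul_le_mul_of_nonneg_right (hC' G) (norm_nonneg f))
      _ = C' * ‖f‖ * ‖f‖ := by ring
    have hmain := sum_abs_le_of_subsets hz
    calc ∑ n ∈ F, ‖(inner ℂ f (s n • φ n) : ℂ)‖ ^ 2 = ∑ n ∈ F, ‖z n‖ := by
          refine Finset.sum_congr rfl (fun n _ => ?_)
          rw [inner_smul_right, hzdef]
          simp only [norm_mul, mul_pow]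
          have h1 : ‖s n‖ ^ 2 = ‖m n‖ := by rw [← hs n, norm_pow]
          rw [h1]
          ring
    _ ≤ 4 * (C' * ‖f‖ * ‖f‖) := hmain
    _ = 4 * C' * ‖f‖ ^ 2 := by ring
  · -- Bessel implies unconditional convergence
    rintro ⟨B, hB⟩ f σ
    set ψ : ℕ → H := fun n => s n • φ n with hψ
    set B' := max B 0 with hB'def
    have hB'0 : (0:ℝ) ≤ B' := le_max_right _ _
    have hB' : ∀ (h : H) (F : Finset ℕ), ∑ n ∈ F, ‖(inner ℂ h (ψ n) : ℂ)‖ ^ 2 ≤ B' * ‖h‖ ^ 2 :=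
      fun h F => le_trans (hB h F) (mul_le_mul_of_nonneg_right (le_max_left _ _) (sq_nonneg _))
    set c : ℕ → ℂ := fun n => s n * ⟪f, φ n⟫ with hcdef
    have hx : (fun n => (m n * ⟪f, φ n⟫) • φ n) = fun n => c n • ψ n := by
      funext n
      rw [hψ, hcdef, smul_smul]
      congr 1
      rw [← hs n]
      ring
    have hcn : ∀ n, ‖c n‖ ^ 2 = ‖(inner ℂ f (ψ n) : ℂ)‖ ^ 2 := by
      intro n
      rw [hψ, hcdef]
      simp only [inner_smul_right]
    have hg : Summable (fun n => ‖c n‖ ^ 2) := by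
      refine summable_of_sum_range_le (c := B' * ‖f‖ ^ 2) (fun n => sq_nonneg _) (fun n => ?_)
      calc ∑ i ∈ Finset.range n, ‖c i‖ ^ 2
          = ∑ i ∈ Finset.range n, ‖(inner ℂ f (ψ i) : ℂ)‖ ^ 2 :=
            Finset.sum_congr rfl (fun i _ => hcn i)
      _ ≤ B' * ‖f‖ ^ 2 := hB' f _
    have hsum : Summable (fun n => c n • ψ n) := by
      rw [summable_iff_vanishing]
      intro e he
      obtain ⟨ε, hε, hball⟩ := Metric.mem_nhds_iff.mp he
      have hδpos : (0:ℝ) < ε ^ 2 / (B' + 1) := by positivity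
      obtain ⟨s₀, hs₀⟩ := (summable_iff_vanishing.mp hg) (Metric.ball 0 (ε ^ 2 / (B' + 1)))
        (Metric.ball_mem_nhds _ hδpos)
      refine ⟨s₀, fun t ht => ?_⟩
      apply hball
      rw [Metric.mem_ball, dist_zero_right]
      have h1 : ‖∑ n ∈ t, c n • ψ n‖ ^ 2 ≤ B' * ∑ n ∈ t, ‖c n‖ ^ 2 :=
        bessel_synth hB'0 hB' c t
      have h2 : ∑ n ∈ t, ‖c n‖ ^ 2 < ε ^ 2 / (B' + 1) := by
        have := hs₀ t ht
        rw [Metric.mem_ball, dist_zero_right, Real.norm_eq_abs] at this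
        exact lt_of_le_of_lt (le_abs_self _) this
      have h3 : ‖∑ n ∈ t, c n • ψ n‖ ^ 2 < ε ^ 2 := by
        have h4 : B' * ∑ n ∈ t, ‖c n‖ ^ 2 ≤ B' * (ε ^ 2 / (B' + 1)) :=
          mul_le_mul_of_nonneg_left h2.le hB'0
        have h5 : B' * (ε ^ 2 / (B' + 1)) < (B' + 1) * (ε ^ 2 / (B' + 1)) :=
          mul_lt_mul_of_pos_right (lt_add_one B') hδpos
        have h6 : (B' + 1) * (ε ^ 2 / (B' + 1)) = ε ^ 2 := by
          field_simp
        linarith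
      exact lt_of_pow_lt_pow_left₀ 2 hε.le h3
    rw [hx]
    have hσs : Summable ((fun n => c n • ψ n) ∘ σ) := (Equiv.summable_iff σ).mpr hsum
    exact ⟨_, hσs.hasSum.tendsto_sum_nat⟩
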